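/- Let (T, Σ) be a measurable space, M a nonempty σ-bounded family of measures on Σ, X a Banach space and θ a Young function. If (f_n) is a sequence of strongly measurable functions T → X with ‖f_n‖_{θ,M} < ∞ for all n and ‖f_n − f_m‖_{θ,M} → 0 as n, m → ∞, then there exist a strongly measurable f : T → X with ‖f‖_{θ,M} < ∞ and ‖f_n − f‖_{θ,M} → 0, and a subsequence (f_{n_k}) such that f_{n_k}(t) → f(t) for every t outside a set N ∈ Σ satisfying μ(N) = 0 for every μ ∈ M (i.e. f_{n_k} → f M-almost everywhere). -/

import Mathlib

open MeasureTheory Filter Set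

/-- A Young function: `θ u = ∫₀ᵘ χ(t) dt` for some non-decreasing, left-continuous
`χ : [0,∞) → [0,∞)` with `χ 0 = 0` which is not identically zero. -/
def IsYoungFunction (θ : ℝ → ℝ) : Prop :=
  ∃ χ : ℝ → ℝ,
    (∀ t, 0 ≤ t → 0 ≤ χ t) ∧
    (∀ s t, 0 ≤ s → s ≤ t → χ s ≤ χ t) ∧
    (∀ t, 0 < t → Tendsto χ (nhdsWithin t (Set.Iio t)) (nhds (χ t))) ∧
    χ 0 = 0 ∧
    (∃ t, 0 ≤ t ∧ χ t ≠ 0) ∧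
    (∀ u, 0 ≤ u → θ u = ∫ t in (0:ℝ)..u, χ t)

/-- A family `M` of measures is σ-bounded: `T = ⋃ᵢ Eᵢ` with the `Eᵢ` pairwise disjoint
measurable sets and `sup_{μ ∈ M} μ (Eᵢ) < ∞` for every `i`. -/
def SigmaBounded {T : Type*} [MeasurableSpace T] (M : Set (Measure T)) : Prop :=
  ∃ E : ℕ → Set T,
    (∀ i, MeasurableSet (E i)) ∧
    (Pairwise fun i j => Disjoint (E i) (E j)) ∧
    (⋃ i, E i) = Set.univ ∧
    ∀ i, (⨆ μ ∈ M, μ (E i)) < ⊤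

/-- The Luxemburg norm of `f` with respect to the Young function `θ` and the family
of measures `M` : `inf {k > 0 : sup_{μ ∈ M} ∫ θ(‖f‖/k) dμ ≤ 1}`. -/
noncomputable def luxNormM {T X : Type*} [MeasurableSpace T] [NormedAddCommGroup X]
    (θ : ℝ → ℝ) (M : Set (Measure T)) (f : T → X) : ENNReal :=
  sInf {k : ENNReal | 0 < k ∧ k ≠ ⊤ ∧
    ∀ μ ∈ M, ∫⁻ t, ENNReal.ofReal (θ (‖f t‖ / k.toReal)) ∂μ ≤ 1}

/-! Since `θ` is unbounded, Chebyshev's inequality for the modular shows that a sequence which is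
Cauchy for the Luxemburg norm is Cauchy in measure, uniformly in `μ ∈ M`. A subsequence with
`μ {‖f (φ (k+1)) - f (φ k)‖ ≥ 2⁻ᵏ} ≤ 2⁻ᵏ` for all `μ ∈ M` then converges pointwise off a set that
Borel–Cantelli makes null for every `μ ∈ M`, and Fatou's lemma applied to the modular of
`f n - f (φ k)` as `k → ∞` turns the Cauchy bounds into `‖f n - g‖_{θ,M} → 0`. The triangle
inequality, which is the convexity of `θ`, shows `‖g‖_{θ,M} < ∞`. -/
open scoped ENNReal Topology

section MonotoneIntegral
variable {χ : ℝ → ℝ} {a b : ℝ}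

theorem MonotoneOn.mul_sub_le_intervalIntegral (hχ : MonotoneOn χ (Icc a b)) (hab : a ≤ b) :
    χ a * (b - a) ≤ ∫ t in a..b, χ t := by
  have hint : IntervalIntegrable χ volume a b := (uIcc_of_le hab ▸ hχ).intervalIntegrable
  calc χ a * (b - a) = ∫ _ in a..b, χ a := by simp [mul_comm]
    _ ≤ ∫ t in a..b, χ t := intervalIntegral.integral_mono_on hab intervalIntegrable_const hint
        fun t ht => hχ (left_mem_Icc.2 hab) ht ht.1

theorem MonotoneOn.intervalIntegral_le_mul_sub (hχ : MonotoneOn χ (Icc a b)) (hab : a ≤ b) :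
    ∫ t in a..b, χ t ≤ χ b * (b - a) := by
  have hint : IntervalIntegrable χ volume a b := (uIcc_of_le hab ▸ hχ).intervalIntegrable
  calc ∫ t in a..b, χ t ≤ ∫ _ in a..b, χ b :=
        intervalIntegral.integral_mono_on hab hint intervalIntegrable_const
          fun t ht => hχ ht (right_mem_Icc.2 hab) ht.2
    _ = χ b * (b - a) := by simp [mul_comm]

end MonotoneIntegral

namespace IsYoungFunction
variable {θ : ℝ → ℝ} (hθ : IsYoungFunction θ)
include hθ

theorem map_zero : θ 0 = 0 := by
  obtain ⟨χ, -, -, -, -, -, hθχ⟩ := hθ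
  simp [hθχ 0 le_rfl]

theorem continuousOn : ContinuousOn θ (Ici 0) := by
  obtain ⟨χ, -, hmono, -, -, -, hθχ⟩ := hθ
  intro x hx
  have hx₁ : 0 ≤ x + 1 := by linarith [mem_Ici.1 hx]
  have hint : IntervalIntegrable χ volume 0 (x + 1) :=
    (uIcc_of_le hx₁ ▸ fun s hs t _ hst => hmono s t hs.1 hst : MonotoneOn χ _).intervalIntegrable
  have hprim := intervalIntegral.continuousOn_primitive_interval' hint left_mem_uIcc
  rw [uIcc_of_le hx₁] at hprim
  have hIcc : Icc 0 (x + 1) ∈ 𝓝[Ici 0] x := by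
    rw [← Ici_inter_Iic]
    exact inter_mem_nhdsWithin _ (Iic_mem_nhds (lt_add_one x))
  have hθx : ContinuousWithinAt θ (Icc 0 (x + 1)) x :=
    (hprim x ⟨hx, by linarith⟩).congr (fun u hu => hθχ u hu.1) (hθχ x hx)
  exact hθx.mono_of_mem_nhdsWithin hIcc

/-- `χ` is the integrand in the definition of a Young function. -/
theorem exists_sub_bounds : ∃ χ : ℝ → ℝ, (∀ t, 0 ≤ t → 0 ≤ χ t) ∧ (∃ t, 0 ≤ t ∧ 0 < χ t) ∧
    ∀ a b, 0 ≤ a → a ≤ b → χ a * (b - a) ≤ θ b - θ a ∧ θ b - θ a ≤ χ b * (b - a) := by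
  obtain ⟨χ, hpos, hmono, -, -, ⟨t₀, ht₀, hχt₀⟩, hθχ⟩ := hθ
  refine ⟨χ, hpos, ⟨t₀, ht₀, (hpos t₀ ht₀).lt_of_ne' hχt₀⟩, fun a b ha hab => ?_⟩
  have hχ : MonotoneOn χ (Icc 0 b) := fun s hs t _ hst => hmono s t hs.1 hst
  have hint : ∀ c ∈ Icc 0 b, IntervalIntegrable χ volume 0 c := fun c hc =>
    (uIcc_of_le hc.1 ▸ hχ.mono (Icc_subset_Icc_right hc.2)).intervalIntegrable
  have hsub : θ b - θ a = ∫ t in a..b, χ t := by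
    rw [hθχ b (ha.trans hab), hθχ a ha,
      intervalIntegral.integral_interval_sub_left (hint b ⟨ha.trans hab, le_rfl⟩)
        (hint a ⟨ha, hab⟩)]
  have hχab : MonotoneOn χ (Icc a b) := hχ.mono (Icc_subset_Icc_left ha)
  rw [hsub]
  exact ⟨hχab.mul_sub_le_intervalIntegral hab, hχab.intervalIntegral_le_mul_sub hab⟩

theorem monotoneOn : MonotoneOn θ (Ici 0) := by
  obtain ⟨χ, hpos, -, hsub⟩ := hθ.exists_sub_bounds
  intro a ha b _ hab
  nlinarith [(hsub a b ha hab).1, hpos a ha]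

theorem nonneg {u : ℝ} (hu : 0 ≤ u) : 0 ≤ θ u :=
  hθ.map_zero ▸ hθ.monotoneOn self_mem_Ici hu hu

theorem convexOn : ConvexOn ℝ (Ici 0) θ := by
  obtain ⟨χ, -, -, hsub⟩ := hθ.exists_sub_bounds
  refine convexOn_of_slope_mono_adjacent (convex_Ici 0) fun {x y z} hx _ hxy hyz => ?_
  have hy : 0 ≤ y := (mem_Ici.1 hx).trans hxy.le
  calc (θ y - θ x) / (y - x) ≤ χ y :=
        (div_le_iff₀ (sub_pos.2 hxy)).2 (hsub x y hx hxy.le).2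
    _ ≤ (θ z - θ y) / (z - y) := (le_div_iff₀ (sub_pos.2 hyz)).2 (hsub y z hy hyz.le).1

theorem tendsto_atTop : Tendsto θ atTop atTop := by
  obtain ⟨χ, -, ⟨t₀, ht₀, hχt₀⟩, hsub⟩ := hθ.exists_sub_bounds
  have hlin : Tendsto (fun u => θ t₀ + χ t₀ * (u - t₀)) atTop atTop :=
    tendsto_atTop_add_const_left _ _
      ((tendsto_atTop_add_const_right _ _ tendsto_id).const_mul_atTop hχt₀)
  refine tendsto_atTop_mono' _ ?_ hlin
  filter_upwards [eventually_ge_atTop t₀] with u hu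
  linarith [(hsub t₀ u ht₀ hu).1]

theorem tendsto_comp {α : Type*} {l : Filter α} {a : α → ℝ} {L : ℝ} (ha : ∀ i, 0 ≤ a i)
    (hL : 0 ≤ L) (h : Tendsto a l (𝓝 L)) : Tendsto (fun i => θ (a i)) l (𝓝 (θ L)) :=
  (hθ.continuousOn L hL).tendsto.comp (tendsto_nhdsWithin_iff.2 ⟨h, Eventually.of_forall ha⟩)

theorem measurable_comp {T : Type*} [MeasurableSpace T] {a : T → ℝ} (ha : Measurable a)
    (h0 : ∀ t, 0 ≤ a t) : Measurable fun t => θ (a t) := by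
  have hθ' : Continuous fun x => θ (max x 0) :=
    hθ.continuousOn.comp_continuous (continuous_id.max continuous_const) fun x => le_max_right x 0
  simpa only [Function.comp_def, max_eq_left (h0 _)] using hθ'.measurable.comp ha

theorem map_add_div_add_le {x y a b : ℝ} (hx : 0 ≤ x) (hy : 0 ≤ y) (ha : 0 < a) (hb : 0 < b) :
    θ ((x + y) / (a + b)) ≤ a / (a + b) * θ (x / a) + b / (a + b) * θ (y / b) := by
  have hcomb : (x + y) / (a + b) = a / (a + b) * (x / a) + b / (a + b) * (y / b) := by
    field_simp
  rw [hcomb]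
  exact hθ.convexOn.2 (div_nonneg hx ha.le) (div_nonneg hy hb.le) (by positivity) (by positivity)
    (by field_simp)

end IsYoungFunction

section Luxemburg
variable {T X : Type*} [MeasurableSpace T] [NormedAddCommGroup X] {θ : ℝ → ℝ}
  {M : Set (Measure T)} {μ : Measure T}

/-- `luxNormM θ M h` is the infimum of the `k > 0` with `luxModular θ μ h k ≤ 1` for all `μ ∈ M`. -/
noncomputable def luxModular (θ : ℝ → ℝ) (μ : Measure T) (h : T → X) (k : ℝ) : ℝ≥0∞ :=
  ∫⁻ t, ENNReal.ofReal (θ (‖h t‖ / k)) ∂μ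

theorem IsYoungFunction.measurable_ofReal_comp_norm_div (hθ : IsYoungFunction θ) {h : T → X}
    (hh : StronglyMeasurable h) {k : ℝ} (hk : 0 ≤ k) :
    Measurable fun t => ENNReal.ofReal (θ (‖h t‖ / k)) :=
  ENNReal.measurable_ofReal.comp
    (hθ.measurable_comp (hh.norm.measurable.div_const k) fun _ => div_nonneg (norm_nonneg _) hk)

theorem luxModular_anti (hθ : IsYoungFunction θ) (h : T → X) {k k' : ℝ} (hk : 0 < k)
    (hkk' : k ≤ k') : luxModular θ μ h k' ≤ luxModular θ μ h k :=
  lintegral_mono fun _ => ENNReal.ofReal_le_ofReal <| hθ.monotoneOn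
    (div_nonneg (norm_nonneg _) (hk.le.trans hkk')) (div_nonneg (norm_nonneg _) hk.le)
    (div_le_div_of_nonneg_left (norm_nonneg _) hk hkk')

theorem luxNormM_le_ofReal {h : T → X} {k : ℝ} (hk : 0 < k)
    (hmod : ∀ μ ∈ M, luxModular θ μ h k ≤ 1) : luxNormM θ M h ≤ ENNReal.ofReal k :=
  sInf_le ⟨ENNReal.ofReal_pos.2 hk, ENNReal.ofReal_ne_top, fun μ hμ => by
    rw [ENNReal.toReal_ofReal hk.le]; exact hmod μ hμ⟩

theorem luxModular_le_one_of_luxNormM_lt (hθ : IsYoungFunction θ) {h : T → X} {k : ℝ}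
    (hlt : luxNormM θ M h < ENNReal.ofReal k) (hμ : μ ∈ M) : luxModular θ μ h k ≤ 1 := by
  obtain ⟨k', ⟨hk'0, hk'top, hmod⟩, hk'k⟩ := sInf_lt_iff.1 hlt
  have hk' : 0 < k'.toReal := ENNReal.toReal_pos hk'0.ne' hk'top
  have hk'le : k'.toReal ≤ k :=
    ENNReal.toReal_le_of_le_ofReal (ENNReal.ofReal_pos.1 (hk'0.trans hk'k)).le hk'k.le
  exact (luxModular_anti hθ h hk' hk'le).trans (hmod μ hμ)

theorem luxModular_add_le (hθ : IsYoungFunction θ) {h₁ h₂ : T → X} (hh₁ : StronglyMeasurable h₁)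
    (hh₂ : StronglyMeasurable h₂) {a b : ℝ} (ha : 0 < a) (hb : 0 < b) :
    luxModular θ μ (fun t => h₁ t + h₂ t) (a + b) ≤
      ENNReal.ofReal (a / (a + b)) * luxModular θ μ h₁ a +
        ENNReal.ofReal (b / (a + b)) * luxModular θ μ h₂ b := by
  have hpt : ∀ t, ENNReal.ofReal (θ (‖h₁ t + h₂ t‖ / (a + b))) ≤
      ENNReal.ofReal (a / (a + b)) * ENNReal.ofReal (θ (‖h₁ t‖ / a)) +
        ENNReal.ofReal (b / (a + b)) * ENNReal.ofReal (θ (‖h₂ t‖ / b)) := fun t => by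
    have hnorm : θ (‖h₁ t + h₂ t‖ / (a + b)) ≤ θ ((‖h₁ t‖ + ‖h₂ t‖) / (a + b)) :=
      hθ.monotoneOn (div_nonneg (norm_nonneg _) (by positivity)) (mem_Ici.2 (by positivity))
        (div_le_div_of_nonneg_right (norm_add_le _ _) (by positivity))
    have hconv := hθ.map_add_div_add_le (norm_nonneg (h₁ t)) (norm_nonneg (h₂ t)) ha hb
    rw [← ENNReal.ofReal_mul (by positivity), ← ENNReal.ofReal_mul (by positivity),
      ← ENNReal.ofReal_add (mul_nonneg (by positivity) (hθ.nonneg (by positivity)))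
        (mul_nonneg (by positivity) (hθ.nonneg (by positivity)))]
    exact ENNReal.ofReal_le_ofReal (hnorm.trans hconv)
  calc luxModular θ μ (fun t => h₁ t + h₂ t) (a + b)
      ≤ ∫⁻ t, (ENNReal.ofReal (a / (a + b)) * ENNReal.ofReal (θ (‖h₁ t‖ / a)) +
          ENNReal.ofReal (b / (a + b)) * ENNReal.ofReal (θ (‖h₂ t‖ / b))) ∂μ := lintegral_mono hpt
    _ = _ := by
      have hm₁ := hθ.measurable_ofReal_comp_norm_div hh₁ ha.le
      have hm₂ := hθ.measurable_ofReal_comp_norm_div hh₂ hb.le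
      rw [lintegral_add_left (hm₁.const_mul _), lintegral_const_mul _ hm₁,
        lintegral_const_mul _ hm₂, luxModular, luxModular]

theorem luxNormM_add_le (hθ : IsYoungFunction θ) {h₁ h₂ : T → X} (hh₁ : StronglyMeasurable h₁)
    (hh₂ : StronglyMeasurable h₂) :
    luxNormM θ M (fun t => h₁ t + h₂ t) ≤ luxNormM θ M h₁ + luxNormM θ M h₂ := by
  simp only [luxNormM, sInf_eq_iInf]
  refine ENNReal.le_iInf₂_add_iInf₂ fun k₁ ⟨hk₁, hk₁top, hmod₁⟩ k₂ ⟨hk₂, hk₂top, hmod₂⟩ =>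
    iInf₂_le _ ⟨hk₁.trans_le le_self_add, ENNReal.add_ne_top.2 ⟨hk₁top, hk₂top⟩, fun μ hμ => ?_⟩
  have ha : 0 < k₁.toReal := ENNReal.toReal_pos hk₁.ne' hk₁top
  have hb : 0 < k₂.toReal := ENNReal.toReal_pos hk₂.ne' hk₂top
  rw [ENNReal.toReal_add hk₁top hk₂top]
  calc luxModular θ μ (fun t => h₁ t + h₂ t) (k₁.toReal + k₂.toReal)
      ≤ ENNReal.ofReal (k₁.toReal / (k₁.toReal + k₂.toReal)) * 1 +
          ENNReal.ofReal (k₂.toReal / (k₁.toReal + k₂.toReal)) * 1 := by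
        refine (luxModular_add_le hθ hh₁ hh₂ ha hb).trans ?_
        gcongr
        exacts [hmod₁ μ hμ, hmod₂ μ hμ]
    _ = 1 := by
        rw [mul_one, mul_one, ← ENNReal.ofReal_add (by positivity) (by positivity), ← add_div,
          div_self (by positivity), ENNReal.ofReal_one]

theorem luxNormM_sub_comm (h₁ h₂ : T → X) :
    luxNormM θ M (fun t => h₁ t - h₂ t) = luxNormM θ M (fun t => h₂ t - h₁ t) := by
  simp only [luxNormM, norm_sub_rev]

theorem mul_measure_le_luxModular (hθ : IsYoungFunction θ) {h : T → X}
    (hh : StronglyMeasurable h) {k ε : ℝ} (hk : 0 < k) (hε : 0 ≤ ε) :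
    ENNReal.ofReal (θ (ε / k)) * μ {t | ε ≤ ‖h t‖} ≤ luxModular θ μ h k := by
  have hsub : {t | ε ≤ ‖h t‖} ⊆
      {t | ENNReal.ofReal (θ (ε / k)) ≤ ENNReal.ofReal (θ (‖h t‖ / k))} := fun t ht =>
    ENNReal.ofReal_le_ofReal <| hθ.monotoneOn (div_nonneg hε hk.le)
      (div_nonneg (norm_nonneg _) hk.le) (div_le_div_of_nonneg_right ht hk.le)
  exact (mul_le_mul_right (measure_mono hsub) _).trans
    (mul_meas_ge_le_lintegral (hθ.measurable_ofReal_comp_norm_div hh hk.le) _)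

theorem exists_forall_luxNormM_lt_measure_le (hθ : IsYoungFunction θ) {ε η : ℝ} (hε : 0 < ε)
    (hη : 0 < η) : ∃ δ > 0, ∀ h : T → X, StronglyMeasurable h →
      luxNormM θ M h < ENNReal.ofReal δ → ∀ μ ∈ M, μ {t | ε ≤ ‖h t‖} ≤ ENNReal.ofReal η := by
  obtain ⟨u, hθu, hu⟩ :=
    ((hθ.tendsto_atTop.eventually_ge_atTop η⁻¹).and (eventually_gt_atTop 0)).exists
  refine ⟨ε / u, div_pos hε hu, fun h hh hlt μ hμ => ?_⟩
  have hcheb := (mul_measure_le_luxModular hθ hh (div_pos hε hu) hε.le).trans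
    (luxModular_le_one_of_luxNormM_lt hθ hlt hμ)
  rw [div_div_cancel₀ hε.ne'] at hcheb
  calc μ {t | ε ≤ ‖h t‖} ≤ (ENNReal.ofReal η⁻¹)⁻¹ :=
        ENNReal.le_inv_iff_mul_le.2 <| calc
          μ {t | ε ≤ ‖h t‖} * ENNReal.ofReal η⁻¹ ≤ ENNReal.ofReal (θ u) * μ {t | ε ≤ ‖h t‖} := by
            rw [mul_comm]; gcongr
          _ ≤ 1 := hcheb
    _ = ENNReal.ofReal η := by rw [ENNReal.ofReal_inv_of_pos hη, inv_inv]

theorem luxModular_le_liminf (hθ : IsYoungFunction θ) {F : ℕ → T → X} {G : T → X}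
    (hF : ∀ n, StronglyMeasurable (F n))
    (hlim : ∀ᵐ t ∂μ, Tendsto (fun n => F n t) atTop (𝓝 (G t))) {k : ℝ} (hk : 0 ≤ k) :
    luxModular θ μ G k ≤ liminf (fun n => luxModular θ μ (F n) k) atTop := by
  have hpt : (fun t => ENNReal.ofReal (θ (‖G t‖ / k))) =ᵐ[μ]
      fun t => liminf (fun n => ENNReal.ofReal (θ (‖F n t‖ / k))) atTop := by
    filter_upwards [hlim] with t ht
    refine (ENNReal.tendsto_ofReal (hθ.tendsto_comp (fun n => ?_) ?_
      (ht.norm.div_const k))).liminf_eq.symm <;> positivity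
  exact (lintegral_congr_ae hpt).trans_le
    (lintegral_liminf_le fun n => hθ.measurable_ofReal_comp_norm_div (hF n) hk)

end Luxemburg

section Completeness
variable {T X : Type*} [MeasurableSpace T] [NormedAddCommGroup X] {θ : ℝ → ℝ}
  {M : Set (Measure T)} {f : ℕ → T → X}

theorem luxNormM_lt_top_of_tendsto_luxNormM_sub (hθ : IsYoungFunction θ)
    (hmeas : ∀ n, StronglyMeasurable (f n)) (hfin : ∀ n, luxNormM θ M (f n) < ⊤) {g : T → X}
    (hg : StronglyMeasurable g)
    (hlim : Tendsto (fun n => luxNormM θ M (fun t => f n t - g t)) atTop (𝓝 0)) :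
    luxNormM θ M g < ⊤ := by
  obtain ⟨n, hn⟩ := (hlim.eventually (gt_mem_nhds zero_lt_one)).exists
  calc luxNormM θ M g = luxNormM θ M (fun t => f n t + (g t - f n t)) := by
        simp only [add_sub_cancel]
    _ ≤ luxNormM θ M (f n) + luxNormM θ M (fun t => g t - f n t) :=
        luxNormM_add_le hθ (hmeas n) (hg.sub (hmeas n))
    _ < ⊤ := ENNReal.add_lt_top.2
        ⟨hfin n, (luxNormM_sub_comm (f n) g ▸ hn).trans ENNReal.one_lt_top⟩

theorem tendsto_luxNormM_sub_of_ae_tendsto_subseq (hθ : IsYoungFunction θ)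
    (hmeas : ∀ n, StronglyMeasurable (f n))
    (hcauchy : Tendsto (fun p : ℕ × ℕ => luxNormM θ M (fun t => f p.1 t - f p.2 t))
      atTop (𝓝 0))
    {φ : ℕ → ℕ} (hφ : Tendsto φ atTop atTop) {g : T → X}
    (hg : ∀ μ ∈ M, ∀ᵐ t ∂μ, Tendsto (fun k => f (φ k) t) atTop (𝓝 (g t))) :
    Tendsto (fun n => luxNormM θ M (fun t => f n t - g t)) atTop (𝓝 0) := by
  refine ENNReal.tendsto_nhds_zero.2 fun ε hε => ?_
  obtain ⟨e, -, he, heε⟩ := ENNReal.lt_iff_exists_real_btwn.1 hε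
  have he₀ : 0 < e := ENNReal.ofReal_pos.1 he
  obtain ⟨N, hN⟩ := eventually_atTop_prod_self'.1 (hcauchy.eventually (gt_mem_nhds he))
  filter_upwards [eventually_ge_atTop N] with n hn
  refine (luxNormM_le_ofReal he₀ fun μ hμ => ?_).trans heε.le
  calc luxModular θ μ (fun t => f n t - g t) e
      ≤ liminf (fun k => luxModular θ μ (fun t => f n t - f (φ k) t) e) atTop :=
        luxModular_le_liminf hθ (fun k => (hmeas n).sub (hmeas (φ k)))
          ((hg μ hμ).mono fun t ht => tendsto_const_nhds.sub ht) he₀.le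
    _ ≤ 1 := by
        refine liminf_le_of_frequently_le' (Eventually.frequently ?_)
        filter_upwards [hφ.eventually_ge_atTop N] with k hk
        exact luxModular_le_one_of_luxNormM_lt hθ (hN n hn (φ k) hk) hμ

theorem exists_strictMono_ae_exists_tendsto [CompleteSpace X] (hθ : IsYoungFunction θ)
    (hmeas : ∀ n, StronglyMeasurable (f n))
    (hcauchy : Tendsto (fun p : ℕ × ℕ => luxNormM θ M (fun t => f p.1 t - f p.2 t))
      atTop (𝓝 0)) :
    ∃ φ : ℕ → ℕ, StrictMono φ ∧
      ∀ μ ∈ M, ∀ᵐ t ∂μ, ∃ c, Tendsto (fun k => f (φ k) t) atTop (𝓝 c) := by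
  have hpow : ∀ k : ℕ, (0 : ℝ) < (1 / 2) ^ k := fun k => by positivity
  choose δ hδ hsmall using fun k =>
    exists_forall_luxNormM_lt_measure_le (X := X) (M := M) hθ (hpow k) (hpow k)
  have hev : ∀ k, ∀ᶠ n in atTop, ∀ m ≥ n,
      luxNormM θ M (fun t => f m t - f n t) < ENNReal.ofReal (δ k) := fun k => by
    obtain ⟨N, hN⟩ := eventually_atTop_prod_self'.1
      (hcauchy.eventually (gt_mem_nhds (ENNReal.ofReal_pos.2 (hδ k))))
    filter_upwards [eventually_ge_atTop N] with n hn m hm using hN m (hn.trans hm) n hn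
  obtain ⟨φ, hφ, hφsmall⟩ := extraction_forall_of_eventually hev
  refine ⟨φ, hφ, fun μ hμ => ?_⟩
  have hsum : ∑' k, μ {t | (1 / 2 : ℝ) ^ k ≤ ‖f (φ (k + 1)) t - f (φ k) t‖} ≠ ⊤ := by
    refine ne_top_of_le_ne_top ?_ (ENNReal.tsum_le_tsum fun k =>
      hsmall k _ ((hmeas _).sub (hmeas _)) (hφsmall k _ (hφ (lt_add_one k)).le) μ hμ)
    rw [← ENNReal.ofReal_tsum_of_nonneg (fun k => (hpow k).le) summable_geometric_two]
    exact ENNReal.ofReal_ne_top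
  filter_upwards [ae_eventually_notMem hsum] with t ht
  refine cauchySeq_tendsto_of_complete (cauchySeq_of_summable_dist
    (.of_norm_bounded_eventually_nat summable_geometric_two ?_))
  filter_upwards [ht] with k hk
  rw [Real.norm_of_nonneg dist_nonneg, dist_eq_norm', Nat.succ_eq_add_one]
  exact (not_le.1 hk).le

end Completeness

theorem henstockOrlicz_complete_ae_subseq_general {T X : Type*} [MeasurableSpace T]
    [NormedAddCommGroup X] [CompleteSpace X]
    (M : Set (Measure T))
    (θ : ℝ → ℝ) (hθ : IsYoungFunction θ)
    (f : ℕ → T → X) (hmeas : ∀ n, StronglyMeasurable (f n))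
    (hfin : ∀ n, luxNormM θ M (f n) < ⊤)
    (hcauchy : Tendsto (fun p : ℕ × ℕ => luxNormM θ M (fun t => f p.1 t - f p.2 t))
      atTop (nhds 0)) :
    ∃ g : T → X, StronglyMeasurable g ∧ luxNormM θ M g < ⊤ ∧
      Tendsto (fun n => luxNormM θ M (fun t => f n t - g t)) atTop (nhds 0) ∧
      ∃ φ : ℕ → ℕ, StrictMono φ ∧
        ∃ N : Set T, MeasurableSet N ∧ (∀ μ ∈ M, μ N = 0) ∧
          ∀ t ∉ N, Tendsto (fun k => f (φ k) t) atTop (nhds (g t)) := by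
  obtain ⟨φ, hφ, hconv⟩ := exists_strictMono_ae_exists_tendsto hθ hmeas hcauchy
  let g : T → X := fun t => limUnder atTop fun k => f (φ k) t
  have hg : StronglyMeasurable g := StronglyMeasurable.limUnder fun k => hmeas (φ k)
  have hnorm := tendsto_luxNormM_sub_of_ae_tendsto_subseq (g := g) hθ hmeas hcauchy hφ.tendsto_atTop
    fun μ hμ => (hconv μ hμ).mono fun t ht => tendsto_nhds_limUnder ht
  refine ⟨g, hg, luxNormM_lt_top_of_tendsto_luxNormM_sub hθ hmeas hfin hg hnorm, hnorm, φ, hφ,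
    {t | ¬ ∃ c, Tendsto (fun k => f (φ k) t) atTop (𝓝 c)},
    (StronglyMeasurable.measurableSet_exists_tendsto fun k => hmeas (φ k)).compl,
    fun μ hμ => ae_iff.1 (hconv μ hμ), fun t ht => tendsto_nhds_limUnder (not_not.1 ht)⟩

/-- If `(fₙ)` is Cauchy in `H^θ(M,X)`, then it converges in norm to some `g ∈ H^θ(M,X)`
and admits a subsequence converging to `g` pointwise `M`-almost everywhere. -/
theorem henstockOrlicz_complete_ae_subseq {T X : Type*} [MeasurableSpace T]
    [NormedAddCommGroup X] [NormedSpace ℝ X] [CompleteSpace X]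
    (M : Set (Measure T)) (hne : M.Nonempty) (hσ : SigmaBounded M)
    (θ : ℝ → ℝ) (hθ : IsYoungFunction θ)
    (f : ℕ → T → X) (hmeas : ∀ n, StronglyMeasurable (f n))
    (hfin : ∀ n, luxNormM θ M (f n) < ⊤)
    (hcauchy : Tendsto (fun p : ℕ × ℕ => luxNormM θ M (fun t => f p.1 t - f p.2 t))
      atTop (nhds 0)) :
    ∃ g : T → X, StronglyMeasurable g ∧ luxNormM θ M g < ⊤ ∧
      Tendsto (fun n => luxNormM θ M (fun t => f n t - g t)) atTop (nhds 0) ∧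
      ∃ φ : ℕ → ℕ, StrictMono φ ∧
        ∃ N : Set T, MeasurableSet N ∧ (∀ μ ∈ M, μ N = 0) ∧
          ∀ t ∉ N, Tendsto (fun k => f (φ k) t) atTop (nhds (g t)) :=
  henstockOrlicz_complete_ae_subseq_general M θ hθ f hmeas hfin hcauchy
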